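/- arXiv:1411.0894 — 2 statements merged into one kernel-verified Lean document; each statement's English description precedes it below -/
import Mathlib

section
/- Conversely, if a density μ on ℝ^d satisfies the Strong Minimal Mass Assumption — there exist κ > 0 and δ₀ > 0 such that ∫_{B(x,δ)} μ(z) dz ≥ κ μ(x) δ^d for all x in the support of μ and all δ ≤ δ₀ — then μ is bounded above by 1/(κ δ₀^d), and moreover λ[Supp(μ) ∩ B(x,δ)] ≥ (κ μ(x)/‖μ‖_∞) δ^d for all x ∈ Supp(μ) and δ ≤ δ₀. -/
open MeasureTheory Metric Real

/-! Testing the minimal mass inequality at radius `δ₀` against the total mass `1` bounds `μ`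
on `S`, hence everywhere. Since `μ` vanishes off `S`, the mass of `B(x, δ)` is at most
`(⨆ μ) · λ(S ∩ B(x, δ))`, and comparing with the minimal mass inequality gives the volume bound. -/

theorem enorm_setIntegral_le_mul_measure_inter {α E : Type*} [MeasurableSpace α]
    [NormedAddCommGroup E] [NormedSpace ℝ E] {μ : Measure α} {f : α → E} {S s : Set α}
    {C : ENNReal} (hs : MeasurableSet s) (hfC : ∀ x ∈ S, ‖f x‖ₑ ≤ C)
    (hfS : ∀ x ∉ S, f x = 0) :
    ‖∫ x in s, f x ∂μ‖ₑ ≤ C * μ (S ∩ s) := by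
  have hf_le : ∀ x, ‖f x‖ₑ ≤ S.indicator (fun _ => C) x := by
    intro x
    by_cases hx : x ∈ S
    · simpa [hx] using hfC x hx
    · simp [hx, hfS x hx]
  calc ‖∫ x in s, f x ∂μ‖ₑ ≤ ∫⁻ x in s, ‖f x‖ₑ ∂μ := enorm_integral_le_lintegral_enorm f
    _ ≤ ∫⁻ x in s, S.indicator (fun _ => C) x ∂μ := lintegral_mono hf_le
    _ ≤ C * μ.restrict s S := lintegral_indicator_const_le S C
    _ = C * μ (S ∩ s) := by rw [Measure.restrict_apply' hs]

theorem bddAbove_range_of_le_on_of_eq_zero_off {α : Type*} {f : α → ℝ} {S : Set α} {C : ℝ}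
    (hfC : ∀ x ∈ S, f x ≤ C) (hfS : ∀ x ∉ S, f x = 0) : BddAbove (Set.range f) := by
  refine ⟨max 0 C, Set.forall_mem_range.2 fun x => ?_⟩
  by_cases hx : x ∈ S
  · exact le_max_of_le_right (hfC x hx)
  · exact (hfS x hx).trans_le (le_max_left _ _)

theorem ENNReal.ofReal_div_mul_le_of_ofReal_mul_le {a b M : ℝ} {m : ENNReal} (hM : 0 ≤ M)
    (h : ENNReal.ofReal (a * b) ≤ ENNReal.ofReal M * m) : ENNReal.ofReal (a / M * b) ≤ m := by
  rcases hM.eq_or_lt with rfl | hMpos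
  · simp
  rw [div_mul_eq_mul_div, ENNReal.ofReal_div_of_pos hMpos]
  exact ENNReal.div_le_of_le_mul' h

theorem strong_minimal_mass_implies_SDA_general {d : ℕ}
    (μ : EuclideanSpace ℝ (Fin d) → ℝ) (hμ0 : ∀ x, 0 ≤ μ x)
    (hμint : Integrable μ volume) (hprob : ∫ x, μ x = 1)
    (S : Set (EuclideanSpace ℝ (Fin d)))
    (hsupp : ∀ x ∉ S, μ x = 0)
    (κ δ₀ : ℝ) (hκ : 0 < κ) (hδ₀ : 0 < δ₀)
    (hmma : ∀ x ∈ S, ∀ δ : ℝ, 0 < δ → δ ≤ δ₀ →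
      κ * μ x * δ ^ d ≤ ∫ z in closedBall x δ, μ z) :
    (∀ x ∈ S, μ x ≤ 1 / (κ * δ₀ ^ d)) ∧
    (∀ x ∈ S, ∀ δ : ℝ, 0 < δ → δ ≤ δ₀ →
      ENNReal.ofReal ((κ * μ x / (⨆ y, μ y)) * δ ^ d) ≤ volume (S ∩ closedBall x δ)) := by
  have hbound : ∀ x ∈ S, μ x ≤ 1 / (κ * δ₀ ^ d) := by
    intro x hx
    rw [le_div_iff₀ (by positivity), ← mul_assoc, mul_comm (μ x)]
    calc κ * μ x * δ₀ ^ d ≤ ∫ z in closedBall x δ₀, μ z := hmma x hx δ₀ hδ₀ le_rfl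
      _ ≤ ∫ z, μ z := setIntegral_le_integral hμint (.of_forall hμ0)
      _ = 1 := hprob
  refine ⟨hbound, fun x hx δ hδ hδle => ?_⟩
  have hbdd : BddAbove (Set.range μ) := bddAbove_range_of_le_on_of_eq_zero_off hbound hsupp
  have hμM : ∀ y ∈ S, ‖μ y‖ₑ ≤ ENNReal.ofReal (⨆ y, μ y) := fun y _ =>
    (Real.enorm_eq_ofReal (hμ0 y)).trans_le (ENNReal.ofReal_le_ofReal (le_ciSup hbdd y))
  refine ENNReal.ofReal_div_mul_le_of_ofReal_mul_le ((hμ0 x).trans (le_ciSup hbdd x)) ?_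
  calc ENNReal.ofReal (κ * μ x * δ ^ d)
      ≤ ENNReal.ofReal (∫ z in closedBall x δ, μ z) :=
        ENNReal.ofReal_le_ofReal (hmma x hx δ hδ hδle)
    _ ≤ ‖∫ z in closedBall x δ, μ z‖ₑ := Real.ofReal_le_enorm _
    _ ≤ _ := enorm_setIntegral_le_mul_measure_inter measurableSet_closedBall hμM hsupp

/-- If a probability density `μ` on `ℝ^d` satisfies the Strong Minimal Mass Assumption with
constants `κ, δ₀`, then `μ ≤ 1/(κ δ₀^d)`, and the support of `μ` is regular:
`λ(Supp(μ) ∩ B(x,δ)) ≥ (κ μ(x)/‖μ‖_∞) δ^d` for `x ∈ Supp(μ)` and `δ ≤ δ₀`. -/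
theorem strong_minimal_mass_implies_SDA {d : ℕ}
    (μ : EuclideanSpace ℝ (Fin d) → ℝ) (hμ0 : ∀ x, 0 ≤ μ x)
    (hμint : Integrable μ volume) (hprob : ∫ x, μ x = 1)
    (S : Set (EuclideanSpace ℝ (Fin d))) (hS : MeasurableSet S)
    (hsupp : ∀ x ∉ S, μ x = 0)
    (κ δ₀ : ℝ) (hκ : 0 < κ) (hδ₀ : 0 < δ₀)
    (hmma : ∀ x ∈ S, ∀ δ : ℝ, 0 < δ → δ ≤ δ₀ →
      κ * μ x * δ ^ d ≤ ∫ z in closedBall x δ, μ z) :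
    (∀ x ∈ S, μ x ≤ 1 / (κ * δ₀ ^ d)) ∧
    (∀ x ∈ S, ∀ δ : ℝ, 0 < δ → δ ≤ δ₀ →
      ENNReal.ofReal ((κ * μ x / (⨆ y, μ y)) * δ ^ d) ≤ volume (S ∩ closedBall x δ)) :=
  strong_minimal_mass_implies_SDA_general μ hμ0 hμint hprob S hsupp κ δ₀ hκ hδ₀ hmma
end

section
/- Let φ ∈ C¹(Ω) with Ω ⊆ ℝ^d open, and let μ = e^{−φ} be a probability density. Suppose there exists a > 0 such that ‖∇φ(x)‖ / φ(x)^a → 0 as μ(x) → 0. Then there exist constants κ > 0, ρ = 1/a, C > 0, δ₀ > 0 such that for all δ ≤ δ₀ and all x ∈ Ω with μ(x) ≥ e^{−C δ^{−ρ}}, one has ∫_{B(x,δ)} μ(z) dz ≥ κ μ(x) δ^d. -/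
open MeasureTheory Metric Real Set Topology Bornology
open Filter (Tendsto atTop)
open scoped ENNReal

/-! With `ε = 1` the hypothesis gives a level `M ≥ 0` above which `‖∇φ‖ ≤ φ ^ a`. Along a
segment, `φ` can climb through a band `[t, t + 1]` lying above `M` only over a length at least
`(t + 1) ^ (-a)`. Hence `φ ≤ max (φ x) M + 1` on the ball of radius `δ` around `x` as soon as
`δ (max (φ x) M + 1) ^ a < 1`, which the condition `φ x ≤ δ ^ (-1/a) / 2` guarantees for small
`δ`. Integrability of `e^{-φ}` forces the sublevel set `{φ ≤ M}` to be bounded, since each of its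
points carries a ball of a fixed positive mass; so `φ` is bounded below, and `e^{-φ}` on the ball
is at least a fixed multiple of `e^{-φ x}`. -/

section Fencing

variable {E : Type*} [NormedAddCommGroup E] [NormedSpace ℝ E] {f : E → ℝ}

theorem le_add_of_norm_fderiv_le_of_mem_Icc (hf : Differentiable ℝ f) {x y : E} {t h K : ℝ}
    (hh : 0 ≤ h) (hx : f x ≤ t) (hK : ∀ z, f z ∈ Icc t (t + h) → ‖fderiv ℝ f z‖ ≤ K)
    (hxy : K * dist x y < h) : f y ≤ t + h := by
  -- `f` restricted to the segment cannot cross the barrier `t + h s`, because it could only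
  -- touch it inside the band, where its slope is less than `h`.
  set ℓ := AffineMap.lineMap (k := ℝ) x y
  have hg : ∀ s, HasDerivAt (f ∘ ℓ) (fderiv ℝ f (ℓ s) (y - x)) s := fun s =>
    (hf _).hasFDerivAt.comp_hasDerivAt s AffineMap.hasDerivAt_lineMap
  have hB : ∀ s, HasDerivAt (fun s => t + h * s) h s := fun s => by
    simpa using ((hasDerivAt_id s).const_mul h).const_add t
  have key := image_le_of_deriv_right_lt_deriv_boundary' (a := 0) (b := 1)
    (fun s _ => (hg s).continuousAt.continuousWithinAt) (fun s _ => (hg s).hasDerivWithinAt)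
    (by simpa [ℓ] using hx) (fun s _ => (hB s).continuousAt.continuousWithinAt)
    (fun s _ => (hB s).hasDerivWithinAt) ?_ (right_mem_Icc.2 zero_le_one)
  · simpa [ℓ] using key
  rintro s ⟨hs0, hs1⟩ hgs
  have hband : f (ℓ s) ∈ Icc t (t + h) := by
    simp only [Function.comp_apply] at hgs
    rw [hgs]; constructor <;> nlinarith
  calc fderiv ℝ f (ℓ s) (y - x) ≤ ‖fderiv ℝ f (ℓ s)‖ * ‖y - x‖ :=
        (le_abs_self _).trans ((fderiv ℝ f (ℓ s)).le_opNorm _)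
    _ ≤ K * dist x y := by
        rw [dist_comm, dist_eq_norm]; exact mul_le_mul_of_nonneg_right (hK _ hband) (norm_nonneg _)
    _ < h := hxy

theorem le_max_add_one_of_norm_fderiv_le_rpow (hf : Differentiable ℝ f) {a M : ℝ} (ha : 0 ≤ a)
    (hM : 0 ≤ M) (hgrad : ∀ z, M ≤ f z → ‖fderiv ℝ f z‖ ≤ f z ^ a) {x y : E}
    (hxy : (max (f x) M + 1) ^ a * dist x y < 1) : f y ≤ max (f x) M + 1 :=
  le_add_of_norm_fderiv_le_of_mem_Icc hf zero_le_one (le_max_left _ _)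
    (fun z hz => have hMz := (le_max_right _ _).trans hz.1
      (hgrad z hMz).trans (rpow_le_rpow (hM.trans hMz) hz.2 ha)) hxy

end Fencing

theorem Metric.isBounded_of_le_measure_ball {α : Type*} [PseudoMetricSpace α] [MeasurableSpace α]
    [OpensMeasurableSpace α] (ν : Measure α) [IsFiniteMeasure ν] {S : Set α} {η : ℝ≥0∞} {r : ℝ}
    (hη : 0 < η) (hS : ∀ z ∈ S, η ≤ ν (ball z r)) : IsBounded S := by
  rcases S.eq_empty_or_nonempty with rfl | ⟨z₀, -⟩
  · exact isBounded_empty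
  have htail : Tendsto (fun n : ℕ => ν (closedBall z₀ n)ᶜ) atTop (𝓝 0) := by
    have hInter : ⋂ n : ℕ, (closedBall z₀ n)ᶜ = ∅ := by
      simp only [← compl_iUnion, compl_empty_iff, iUnion_closedBall_nat]
    simpa [Function.comp_def, hInter] using tendsto_measure_iInter_atTop (μ := ν)
      (s := fun n : ℕ => (closedBall z₀ n)ᶜ)
      (fun n => measurableSet_closedBall.compl.nullMeasurableSet)
      (fun m n hmn => compl_subset_compl.2 (closedBall_subset_closedBall (Nat.cast_le.2 hmn)))
      ⟨0, measure_ne_top _ _⟩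
  obtain ⟨n, hn⟩ := (htail.eventually (gt_mem_nhds hη)).exists
  refine (isBounded_ball (x := z₀) (r := n + r)).subset fun z hz => ?_
  obtain ⟨y, hyz, hyn⟩ : (ball z r ∩ closedBall z₀ n).Nonempty := by
    by_contra! h
    have : ball z r ⊆ (closedBall z₀ n)ᶜ := fun y hy hy' => h.subset ⟨hy, hy'⟩
    exact (hS z hz).not_gt ((measure_mono this).trans_lt hn)
  rw [mem_ball] at hyz ⊢
  rw [mem_closedBall] at hyn
  linarith [dist_triangle_left z z₀ y]

theorem Continuous.bddBelow_range_of_isBounded_setOf_le {α : Type*} [PseudoMetricSpace α]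
    [ProperSpace α] {f : α → ℝ} (hf : Continuous f) {c : ℝ} (h : IsBounded {z | f z ≤ c}) :
    BddBelow (range f) := by
  obtain ⟨m, hm⟩ := (h.isCompact_closure.image hf).bddBelow
  refine ⟨min m c, forall_mem_range.2 fun z => ?_⟩
  by_cases hz : f z ≤ c
  · exact (min_le_left _ _).trans (hm ⟨z, subset_closure hz, rfl⟩)
  · exact (min_le_right _ _).trans (not_le.1 hz).le

theorem bddBelow_range_of_integrable_exp_neg {E : Type*} [NormedAddCommGroup E] [NormedSpace ℝ E]
    [FiniteDimensional ℝ E] [MeasurableSpace E] [BorelSpace E] (μ : Measure E)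
    [μ.IsAddHaarMeasure] {f : E → ℝ} (hf : Differentiable ℝ f) {a M : ℝ} (ha : 0 ≤ a)
    (hM : 0 ≤ M) (hgrad : ∀ z, M ≤ f z → ‖fderiv ℝ f z‖ ≤ f z ^ a)
    (hint : Integrable (fun z => exp (-f z)) μ) : BddBelow (range f) := by
  set r : ℝ := ((M + 1) ^ a + 1)⁻¹
  have hr : 0 < r := by positivity
  have hball : ∀ z, f z ≤ M → ∀ y ∈ ball z r, f y ≤ M + 1 := by
    intro z hz y hy
    have hLa : 0 ≤ (M + 1) ^ a := by positivity
    have := le_max_add_one_of_norm_fderiv_le_rpow hf ha hM hgrad (x := z) (y := y) ?_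
    · rwa [max_eq_right hz] at this
    rw [max_eq_right hz, dist_comm]
    calc (M + 1) ^ a * dist y z ≤ (M + 1) ^ a * r :=
          mul_le_mul_of_nonneg_left (mem_ball.1 hy).le hLa
      _ < 1 := by rw [mul_inv_lt_iff₀ (by positivity)]; linarith
  set ν := μ.withDensity fun z => ENNReal.ofReal (exp (-f z))
  have : IsFiniteMeasure ν := isFiniteMeasure_withDensity_ofReal hint.2
  refine hf.continuous.bddBelow_range_of_isBounded_setOf_le (c := M)
    (isBounded_of_le_measure_ball ν (r := r)
      (η := ENNReal.ofReal (exp (-(M + 1))) * μ (ball 0 r))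
      ?_ fun z hz => ?_)
  · exact ENNReal.mul_pos (by simpa using exp_pos _) (measure_ball_pos μ 0 hr).ne'
  rw [withDensity_apply _ measurableSet_ball, ← Measure.addHaar_ball_center μ z,
    ← setLIntegral_const]
  refine setLIntegral_mono' measurableSet_ball fun y hy => ?_
  exact ENNReal.ofReal_le_ofReal (exp_le_exp.2 (neg_le_neg (hball z hz y hy)))

theorem rpow_max_add_one_mul_lt_one {a M t δ : ℝ} (ha : 0 < a) (hM : 0 ≤ M) (hδ : 0 < δ)
    (hδ₀ : δ ≤ (4 * (M + 1)) ^ (-a)) (ht : t ≤ 1 / 2 * δ ^ (-(1 / a))) :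
    (max t M + 1) ^ a * δ < 1 := by
  set u := δ ^ (1 / a)
  have hu : 0 < u := by positivity
  have hδu : δ = u ^ a := by simp only [u, one_div, rpow_inv_rpow hδ.le ha.ne']
  have hMu : (M + 1) * u ≤ 1 / 4 := by
    have : u ≤ (4 * (M + 1))⁻¹ := by
      rwa [hδu, rpow_neg (by positivity), ← inv_rpow (by positivity),
        rpow_le_rpow_iff hu.le (by positivity) ha] at hδ₀
    calc (M + 1) * u ≤ (M + 1) * (4 * (M + 1))⁻¹ := by gcongr
      _ = 1 / 4 := by field_simp
  have htu : t * u ≤ 1 / 2 := by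
    rwa [rpow_neg hδ.le, ← div_eq_mul_inv, le_div_iff₀ hu] at ht
  rw [hδu, ← mul_rpow (by positivity) hu.le]
  refine rpow_lt_one (by positivity) ?_ ha
  have : max t M * u ≤ 1 / 2 + M * u := by
    rcases le_total t M with h | h
    · rw [max_eq_right h]; nlinarith
    · rw [max_eq_left h]; nlinarith
  nlinarith

/-- If `μ = e^{−φ}` is a probability density with `φ ∈ C¹` and `‖∇φ(x)‖ / φ(x)^a → 0` as
`μ(x) → 0`, then `μ` satisfies the weak minimal mass condition: there are `κ, C, δ₀ > 0`
such that `∫_{B(x,δ)} μ ≥ κ μ(x) δ^d` whenever `δ ≤ δ₀` and `μ(x) ≥ e^{−C δ^{−1/a}}`. -/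
theorem weak_minimal_mass_of_log_density {d : ℕ}
    (φ : EuclideanSpace ℝ (Fin d) → ℝ) (hφ : ContDiff ℝ 1 φ)
    (hprob : ∫ x, Real.exp (-φ x) = 1)
    (a : ℝ) (ha : 0 < a)
    (hlim : ∀ ε > (0:ℝ), ∃ c > (0:ℝ), ∀ x, Real.exp (-φ x) ≤ c →
      ‖gradient φ x‖ ≤ ε * (φ x) ^ a) :
    ∃ κ > (0:ℝ), ∃ C > (0:ℝ), ∃ δ₀ > (0:ℝ), ∀ δ : ℝ, 0 < δ → δ ≤ δ₀ →
      ∀ x : EuclideanSpace ℝ (Fin d),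
        Real.exp (-C * δ ^ (-(1 / a))) ≤ Real.exp (-φ x) →
        κ * Real.exp (-φ x) * δ ^ d ≤ ∫ z in closedBall x δ, Real.exp (-φ z) := by
  obtain ⟨c, hc, hc_grad⟩ := hlim 1 one_pos
  set M := max 0 (-log c)
  have hM : 0 ≤ M := le_max_left _ _
  have hgrad : ∀ z, M ≤ φ z → ‖fderiv ℝ φ z‖ ≤ φ z ^ a := fun z hz => by
    have hzc : exp (-φ z) ≤ c := by
      rw [← exp_log hc]; exact exp_le_exp.2 (by linarith [le_max_right 0 (-log c)])
    simpa [gradient] using hc_grad z hzc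
  have hint : Integrable (fun z => exp (-φ z)) := by
    by_contra h
    rw [integral_undef h] at hprob
    exact zero_ne_one hprob
  have hdiff : Differentiable ℝ φ := hφ.differentiable one_ne_zero
  obtain ⟨m, hm⟩ := bddBelow_range_of_integrable_exp_neg volume hdiff ha.le hM hgrad hint
  set v := volume.real (ball (0 : EuclideanSpace ℝ (Fin d)) 1)
  have hv : 0 < v := ENNReal.toReal_pos (measure_ball_pos _ _ one_pos).ne' measure_ball_lt_top.ne
  refine ⟨exp (-(|M - m| + 1)) * v, by positivity, 1 / 2, by norm_num, (4 * (M + 1)) ^ (-a),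
    by positivity, fun δ hδ hδ₀ x hx => ?_⟩
  have hφx : φ x ≤ 1 / 2 * δ ^ (-(1 / a)) := by linarith [exp_le_exp.1 hx]
  have hball : ∀ y ∈ closedBall x δ, φ y ≤ max (φ x) M + 1 := fun y hy =>
    le_max_add_one_of_norm_fderiv_le_rpow hdiff ha.le hM hgrad
      ((mul_le_mul_of_nonneg_left (mem_closedBall'.1 hy) (by positivity)).trans_lt
        (rpow_max_add_one_mul_lt_one ha hM hδ hδ₀ hφx))
  have hmax : max (φ x) M + 1 ≤ φ x + (|M - m| + 1) := by
    have hMx : M ≤ φ x + |M - m| := by linarith [le_abs_self (M - m), hm (mem_range_self x)]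
    linarith [max_le (le_add_of_nonneg_right (abs_nonneg (M - m))) hMx]
  calc exp (-(|M - m| + 1)) * v * exp (-φ x) * δ ^ d
      = exp (-(φ x + (|M - m| + 1))) * volume.real (closedBall x δ) := by
        rw [Measure.addHaar_real_closedBall _ _ hδ.le, finrank_euclideanSpace_fin,
          neg_add (φ x), exp_add]
        ring
    _ ≤ exp (-(max (φ x) M + 1)) * volume.real (closedBall x δ) := by gcongr
    _ ≤ ∫ z in closedBall x δ, exp (-φ z) :=
        setIntegral_ge_of_const_le_real measurableSet_closedBall measure_closedBall_lt_top.ne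
          (fun y hy => exp_le_exp.2 (neg_le_neg (hball y hy))) hint.integrableOn
end
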